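/- arXiv:2003.12682 — 2 statements merged into one kernel-verified Lean document; each statement's English description precedes it below -/
import Mathlib

section
/- Let c₀ ≠ 0 be a real constant and let f be twice differentiable on an open interval satisfying f''(u) + (2c₀/(c₀²+1)) f'(u)² + 2c₀ = 0 with f'' nowhere zero. Then there exist constants a, b such that f(u) = ((c₀²+1)/(2c₀)) ln |cos((2c₀/√(c₀²+1)) u - a)| + b. -/
/-! Substituting `y = f'` turns the equation into the Riccati equation
`y' = -(ω / s) (y² + s²)` with `s = √(c₀² + 1)` and `ω = 2c₀ / s`, along which `arctan (y / s)`
decreases at the constant rate `ω`; hence `f' = s tan (a - ω u)`, and integrating once more gives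
`f = (s / ω) log cos (ω u - a) + b`, where `s / ω = (c₀² + 1) / (2c₀)`. -/

open Real Set

lemma exists_eq_add_of_hasDerivAt {U : Set ℝ} (hU : IsOpen U) (hU' : IsPreconnected U)
    {f g f' : ℝ → ℝ} (hf : ∀ x ∈ U, HasDerivAt f (f' x) x) (hg : ∀ x ∈ U, HasDerivAt g (f' x) x) :
    ∃ a, ∀ x ∈ U, f x = g x + a :=
  hU.exists_eq_add_of_deriv_eq hU'
    (fun x hx ↦ (hf x hx).differentiableAt.differentiableWithinAt)
    (fun x hx ↦ (hg x hx).differentiableAt.differentiableWithinAt)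
    (fun x hx ↦ (hf x hx).deriv.trans (hg x hx).deriv.symm)

lemma exists_eq_mul_tan_of_riccati {U : Set ℝ} (hU : IsOpen U) (hU' : IsPreconnected U)
    {s ω : ℝ} (hs : 0 < s) {y : ℝ → ℝ}
    (hy : ∀ x ∈ U, HasDerivAt y (-(ω / s) * (y x ^ 2 + s ^ 2)) x) :
    ∃ a, ∀ x ∈ U, a - ω * x ∈ Ioo (-(π / 2)) (π / 2) ∧ y x = s * tan (a - ω * x) := by
  have harctan : ∀ x ∈ U, HasDerivAt (fun x ↦ arctan (y x / s)) (-ω) x := by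
    intro x hx
    refine ((hasDerivAt_arctan _).comp x ((hy x hx).div_const s)).congr_deriv ?_
    field_simp
    ring
  have hlin : ∀ x ∈ U, HasDerivAt (fun x ↦ -ω * x) (-ω) x := fun x _ ↦ by
    simpa using (hasDerivAt_id x).const_mul (-ω)
  obtain ⟨a, ha⟩ := exists_eq_add_of_hasDerivAt hU hU' harctan hlin
  refine ⟨a, fun x hx ↦ ?_⟩
  have hangle : a - ω * x = arctan (y x / s) := by linarith [ha x hx]
  rw [hangle, tan_arctan]
  exact ⟨arctan_mem_Ioo _, by field_simp⟩

lemma hasDerivAt_log_cos_mul_sub {ω a x : ℝ} (hcos : cos (ω * x - a) ≠ 0) :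
    HasDerivAt (fun x ↦ log (cos (ω * x - a))) (ω * tan (a - ω * x)) x := by
  have hlin : HasDerivAt (fun x ↦ ω * x - a) ω x := by
    simpa using ((hasDerivAt_id x).const_mul ω).sub_const a
  refine (((hasDerivAt_cos _).comp x hlin).log hcos).congr_deriv ?_
  rw [Function.comp_apply, ← neg_sub, sin_neg, cos_neg, tan_eq_sin_div_cos]
  ring

theorem stmt_5_general (c₀ α β : ℝ) (hc₀ : c₀ ≠ 0) (f : ℝ → ℝ)
    (hd1 : ∀ u ∈ Set.Ioo α β, DifferentiableAt ℝ f u)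
    (hd2 : ∀ u ∈ Set.Ioo α β, DifferentiableAt ℝ (deriv f) u)
    (hode : ∀ u ∈ Set.Ioo α β,
      deriv (deriv f) u + (2 * c₀ / (c₀ ^ 2 + 1)) * (deriv f u) ^ 2 + 2 * c₀ = 0) :
    ∃ a b : ℝ, ∀ u ∈ Set.Ioo α β,
      f u = ((c₀ ^ 2 + 1) / (2 * c₀)) *
          Real.log |Real.cos ((2 * c₀ / Real.sqrt (c₀ ^ 2 + 1)) * u - a)| + b := by
  set s := √(c₀ ^ 2 + 1)
  set ω := 2 * c₀ / s
  have hs : 0 < s := sqrt_pos.2 (by positivity)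
  have hs2 : s ^ 2 = c₀ ^ 2 + 1 := sq_sqrt (by positivity)
  have hriccati : ∀ u ∈ Ioo α β, HasDerivAt (deriv f) (-(ω / s) * (deriv f u ^ 2 + s ^ 2)) u := by
    intro u hu
    refine (hd2 u hu).hasDerivAt.congr_deriv ?_
    have hk : 2 * c₀ / (c₀ ^ 2 + 1) * (c₀ ^ 2 + 1) = 2 * c₀ := div_mul_cancel₀ _ (by positivity)
    rw [div_div, ← sq, hs2]
    linear_combination hode u hu + hk
  obtain ⟨a, ha⟩ := exists_eq_mul_tan_of_riccati isOpen_Ioo isPreconnected_Ioo hs hriccati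
  have hcos : ∀ u ∈ Ioo α β, 0 < cos (ω * u - a) := fun u hu ↦ by
    rw [← neg_sub, cos_neg]
    exact cos_pos_of_mem_Ioo (ha u hu).1
  have hprimitive : ∀ u ∈ Ioo α β, HasDerivAt
      (fun u ↦ (c₀ ^ 2 + 1) / (2 * c₀) * log (cos (ω * u - a))) (deriv f u) u := by
    intro u hu
    refine ((hasDerivAt_log_cos_mul_sub (hcos u hu).ne').const_mul
      ((c₀ ^ 2 + 1) / (2 * c₀))).congr_deriv ?_
    rw [(ha u hu).2, ← hs2, show ω = 2 * c₀ / s from rfl]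
    field_simp
  obtain ⟨b, hb⟩ := exists_eq_add_of_hasDerivAt isOpen_Ioo isPreconnected_Ioo
    (fun u hu ↦ (hd1 u hu).hasDerivAt) hprimitive
  exact ⟨a, b, fun u hu ↦ by rw [hb u hu, abs_of_pos (hcos u hu)]⟩

theorem stmt_5 (c₀ α β : ℝ) (hc₀ : c₀ ≠ 0) (f : ℝ → ℝ)
    (hd1 : ∀ u ∈ Set.Ioo α β, DifferentiableAt ℝ f u)
    (hd2 : ∀ u ∈ Set.Ioo α β, DifferentiableAt ℝ (deriv f) u)
    (hne : ∀ u ∈ Set.Ioo α β, deriv (deriv f) u ≠ 0)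
    (hode : ∀ u ∈ Set.Ioo α β,
      deriv (deriv f) u + (2 * c₀ / (c₀ ^ 2 + 1)) * (deriv f u) ^ 2 + 2 * c₀ = 0) :
    ∃ a b : ℝ, ∀ u ∈ Set.Ioo α β,
      f u = ((c₀ ^ 2 + 1) / (2 * c₀)) *
          Real.log |Real.cos ((2 * c₀ / Real.sqrt (c₀ ^ 2 + 1)) * u - a)| + b :=
  stmt_5_general c₀ α β hc₀ f hd1 hd2 hode
end

section
/- Let c₀ ≠ 0 and suppose f satisfies f''(u) + c₀ f'(u)² - c₀ = 0 on an open interval with |f'| < 1. Then f(u) = (1/c₀) ln |e^{c₀u} - ĉ e^{-c₀u}| + const for some constant ĉ ≠ 0 (on intervals where e^{c₀u} - ĉ e^{-c₀u} ≠ 0). -/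
/-!
With `g = f'` the equation is the Riccati equation `g' = c₀ (1 - g²)`, whose solutions with
`|g| < 1` are `g = tanh (c₀ u + k)`, i.e.
`g = (e^{c₀u} - D e^{-c₀u}) / (e^{c₀u} + D e^{-c₀u})` with `D = e^{-2k} > 0`.
This is `1/c₀` times the logarithmic derivative of `e^{c₀u} + D e^{-c₀u}`, so `ĉ = -D`.
-/

open Real Set

theorem exists_eq_const_of_hasDerivAt_zero {s : Set ℝ} (hs : IsOpen s) (hs' : IsPreconnected s)
    {F : ℝ → ℝ} (hF : ∀ u ∈ s, HasDerivAt F 0 u) : ∃ b, ∀ u ∈ s, F u = b :=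
  hs.exists_is_const_of_deriv_eq_zero hs'
    (fun u hu => (hF u hu).differentiableAt.differentiableWithinAt) fun u hu => (hF u hu).deriv

theorem exists_pos_eq_of_hasDerivAt_mul_one_sub_sq {s : Set ℝ} (hs : IsOpen s)
    (hs' : IsPreconnected s) {c : ℝ} {g : ℝ → ℝ}
    (hg : ∀ u ∈ s, HasDerivAt g (c * (1 - g u ^ 2)) u) (hg1 : ∀ u ∈ s, |g u| < 1) :
    ∃ D > 0, ∀ u ∈ s,
      g u = (exp (c * u) - D * exp (-(c * u))) / (exp (c * u) + D * exp (-(c * u))) := by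
  -- `log (1 - g) - log (1 + g) + 2 c u` is `2 (c u - artanh g)`, a first integral of the equation.
  have hconst : ∀ u ∈ s, HasDerivAt (fun u => log (1 - g u) - log (1 + g u) + 2 * c * u) 0 u := by
    intro u hu
    obtain ⟨hneg, hlt⟩ := abs_lt.1 (hg1 u hu)
    have h := ((((hg u hu).const_sub 1).log (by linarith)).fun_sub
      (((hg u hu).const_add 1).log (by linarith))).fun_add ((hasDerivAt_id u).const_mul (2 * c))
    refine h.congr_deriv ?_
    have : 1 - g u ≠ 0 := by linarith
    have : 1 + g u ≠ 0 := by linarith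
    field_simp
    ring
  obtain ⟨a, ha⟩ := exists_eq_const_of_hasDerivAt_zero hs hs' hconst
  refine ⟨exp a, exp_pos a, fun u hu => ?_⟩
  obtain ⟨hneg, hlt⟩ := abs_lt.1 (hg1 u hu)
  have hlog : log (1 - g u) + c * u = log (1 + g u) + a - c * u := by linarith [ha u hu]
  have hexp : (1 - g u) * exp (c * u) = (1 + g u) * exp a * exp (-(c * u)) := by
    have h := congrArg exp hlog
    rw [exp_add, exp_sub, exp_add, exp_log (by linarith), exp_log (by linarith)] at h
    rw [exp_neg, h, div_eq_mul_inv]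
  rw [eq_div_iff (by positivity)]
  linear_combination -hexp

theorem hasDerivAt_one_div_mul_log_exp_add_mul_exp_neg {c D : ℝ} (hc : c ≠ 0) (hD : 0 ≤ D)
    (u : ℝ) :
    HasDerivAt (fun u => 1 / c * log (exp (c * u) + D * exp (-(c * u))))
      ((exp (c * u) - D * exp (-(c * u))) / (exp (c * u) + D * exp (-(c * u)))) u := by
  have hlin : HasDerivAt (fun u => c * u) c u := by simpa using (hasDerivAt_id u).const_mul c
  have hpos : 0 < exp (c * u) + D * exp (-(c * u)) := by positivity
  have h := ((hlin.exp.fun_add (hlin.fun_neg.exp.const_mul D)).log hpos.ne').const_mul (1 / c)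
  refine h.congr_deriv ?_
  field_simp
  ring

theorem stmt_17 (c₀ α β : ℝ) (hc₀ : c₀ ≠ 0) (f : ℝ → ℝ)
    (hd1 : ∀ u ∈ Set.Ioo α β, DifferentiableAt ℝ f u)
    (hd2 : ∀ u ∈ Set.Ioo α β, DifferentiableAt ℝ (deriv f) u)
    (hsp : ∀ u ∈ Set.Ioo α β, |deriv f u| < 1)
    (hode : ∀ u ∈ Set.Ioo α β,
      deriv (deriv f) u + c₀ * (deriv f u) ^ 2 - c₀ = 0) :
    ∃ (chat b : ℝ), chat ≠ 0 ∧ ∀ u ∈ Set.Ioo α β,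
      Real.exp (c₀ * u) - chat * Real.exp (-(c₀ * u)) ≠ 0 ∧
      f u = (1 / c₀) * Real.log |Real.exp (c₀ * u) - chat * Real.exp (-(c₀ * u))| + b := by
  have hriccati : ∀ u ∈ Ioo α β, HasDerivAt (deriv f) (c₀ * (1 - deriv f u ^ 2)) u :=
    fun u hu => (hd2 u hu).hasDerivAt.congr_deriv (by linear_combination hode u hu)
  obtain ⟨D, hD, hf'⟩ :=
    exists_pos_eq_of_hasDerivAt_mul_one_sub_sq isOpen_Ioo isPreconnected_Ioo hriccati hsp
  have hF : ∀ u ∈ Ioo α β, HasDerivAt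
      (fun u => f u - 1 / c₀ * log (exp (c₀ * u) + D * exp (-(c₀ * u)))) 0 u := fun u hu => by
    simpa [← hf' u hu] using
      (hd1 u hu).hasDerivAt.fun_sub (hasDerivAt_one_div_mul_log_exp_add_mul_exp_neg hc₀ hD.le u)
  obtain ⟨b, hb⟩ := exists_eq_const_of_hasDerivAt_zero isOpen_Ioo isPreconnected_Ioo hF
  refine ⟨-D, b, neg_ne_zero.2 hD.ne', fun u hu => ?_⟩
  have hpos : 0 < exp (c₀ * u) - -D * exp (-(c₀ * u)) := by
    rw [neg_mul, sub_neg_eq_add]; positivity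
  refine ⟨hpos.ne', ?_⟩
  rw [abs_of_pos hpos, neg_mul, sub_neg_eq_add]
  linarith [hb u hu]
end
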